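/- arXiv:1107.1922 — 7 statements merged into one kernel-verified Lean document; each statement's English description precedes it below -/
import Mathlib

section
/- There exist constants C, c > 0, depending only on γ, β, μ, such that for every k ∈ ℝ³ and every solution (n̂,û,Ê,B̂) of the Fourier-transformed linearized Navier–Stokes–Maxwell system at frequency k, one has for all t ≥ 0: |Û(t,k)|² ≤ C·exp(−c|k|⁴t/(1+|k|²)³)·|Û(0,k)|². -/
noncomputable section

/-- `ℝ³` as a Euclidean space. -/
abbrev E3 := EuclideanSpace ℝ (Fin 3)

/-- Complex cross product of two vectors in `ℂ³`. -/
def crossC (a b : Fin 3 → ℂ) : Fin 3 → ℂ :=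
  ![a 1 * b 2 - a 2 * b 1, a 2 * b 0 - a 0 * b 2, a 0 * b 1 - a 1 * b 0]

/-- Bilinear (non-hermitian) dot product on `ℂ³`. -/
def dotC (a b : Fin 3 → ℂ) : ℂ := ∑ i, a i * b i

/-- Hermitian dot product `(a | b) = Σ aᵢ conj(bᵢ)` on `ℂ³`. -/
def hdotC (a b : Fin 3 → ℂ) : ℂ := ∑ i, a i * (starRingEnd ℂ) (b i)

/-- The complexification of a real vector `k ∈ ℝ³`. -/
def vecC (k : E3) : Fin 3 → ℂ := fun i => ((k i : ℝ) : ℂ)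

/-- `(n̂,û,Ê,B̂)` solves the Fourier-transformed linearized
Navier–Stokes–Maxwell system at frequency `k`:
`∂ₜn̂ + γik·û = 0`, `∂ₜû + γik n̂ + βÊ + μ|k|²û = 0`,
`∂ₜÊ − ik×B̂ − βû = 0`, `∂ₜB̂ + ik×Ê = 0`,
with the constraints `ik·Ê = −(β/γ)n̂` and `k·B̂ = 0`, for `t ≥ 0`. -/
structure FourierNSMSol (γ β μ : ℝ) (k : E3)
    (n : ℝ → ℂ) (u E B : ℝ → Fin 3 → ℂ) : Prop where
  hn : ∀ t : ℝ, 0 ≤ t → HasDerivWithinAt n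
    (-((γ:ℂ) * Complex.I * dotC (vecC k) (u t))) (Set.Ici 0) t
  hu : ∀ t : ℝ, 0 ≤ t → ∀ i, HasDerivWithinAt (fun s => u s i)
    (-((γ:ℂ) * Complex.I * ((k i : ℝ):ℂ) * n t) - (β:ℂ) * E t i
      - ((μ * ‖k‖^2 : ℝ):ℂ) * u t i) (Set.Ici 0) t
  hE : ∀ t : ℝ, 0 ≤ t → ∀ i, HasDerivWithinAt (fun s => E s i)
    (Complex.I * crossC (vecC k) (B t) i + (β:ℂ) * u t i) (Set.Ici 0) t
  hB : ∀ t : ℝ, 0 ≤ t → ∀ i, HasDerivWithinAt (fun s => B s i)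
    (-(Complex.I * crossC (vecC k) (E t) i)) (Set.Ici 0) t
  hdivE : ∀ t : ℝ, 0 ≤ t →
    Complex.I * dotC (vecC k) (E t) = -(((β/γ : ℝ)):ℂ) * n t
  hdivB : ∀ t : ℝ, 0 ≤ t → dotC (vecC k) (B t) = 0

/-- `|Û|² = |n̂|² + |û|² + |Ê|² + |B̂|²`. -/
def UsqNorm (n : ℂ) (u E B : Fin 3 → ℂ) : ℝ :=
  Complex.normSq n + ∑ i, Complex.normSq (u i) + ∑ i, Complex.normSq (E i)
    + ∑ i, Complex.normSq (B i)

/-- The time-frequency Lyapunov functional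
`ℰ(Û) = |Û|² + κ₁Re(iγkn̂|û)/(1+|k|²) + κ₁|k|²Re(Ê|û)/(1+|k|²)²
      + κ₁κ₂|k|²Re(−ik×B̂|Ê)/(1+|k|²)³`. -/
def lyapE (κ₁ κ₂ γ : ℝ) (k : E3) (n : ℂ) (u E B : Fin 3 → ℂ) : ℝ :=
  UsqNorm n u E B
  + κ₁ * (hdotC (fun i => Complex.I * (γ:ℂ) * ((k i : ℝ):ℂ) * n) u).re / (1 + ‖k‖^2)
  + κ₁ * ‖k‖^2 * (hdotC E u).re / (1 + ‖k‖^2)^2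
  + κ₁ * κ₂ * ‖k‖^2
      * (hdotC (fun i => -(Complex.I * crossC (vecC k) B i)) E).re / (1 + ‖k‖^2)^3


/-!
The time–frequency Lyapunov functional `ℰ = lyapE κ₁ (β / 4) γ k` differs from `|Û|²` by at most
`|Û|² / 4` once `κ₁` is small (Cauchy–Schwarz and Young). Along a solution the energy identity
gives `d|Û|²/dt = -2μ|k|²|û|²`, while the three cross terms of `ℰ`, differentiated with the
equations and the constraints `ik·Ê = -(β/γ)n̂`, `k·B̂ = 0`, produce dissipation of `n̂`, `Ê`, `B̂`
with weights `(1+|k|²)⁻¹`, `|k|²(1+|k|²)⁻²`, `|k|²(1+|k|²)⁻³`. Absorbing the remaining terms by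
Young's inequality into these and into `μ|k|²|û|²` gives
`dℰ/dt ≤ -δ|k|⁴(1+|k|²)⁻³|Û|² ≤ -(4δ/5)|k|⁴(1+|k|²)⁻³ ℰ`, and Grönwall's inequality together
with `3/4 |Û|² ≤ ℰ ≤ 5/4 |Û|²` yields the bound with `C = 2`, `c = 4δ/5`.
-/

open Complex ComplexConjugate Set

theorem abs_le_add_div_two_of_sq_le_mul {x a b : ℝ} (h : x ^ 2 ≤ a * b) (ha : 0 ≤ a)
    (hb : 0 ≤ b) : |x| ≤ (a + b) / 2 :=
  abs_le.2 (abs_le_of_sq_le_sq' (by nlinarith [sq_nonneg (a - b)]) (by positivity))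

theorem abs_div_le_of_sq_le_mul {y c a b s : ℝ} (h : y ^ 2 ≤ c * (a * b)) (hc : c ≤ s ^ 2)
    (ha : 0 ≤ a) (hb : 0 ≤ b) (hs : 0 < s) : |y / s| ≤ (a + b) / 2 := by
  have hy : |y| ≤ (s * a + s * b) / 2 :=
    abs_le_add_div_two_of_sq_le_mul
      (by nlinarith [mul_le_mul_of_nonneg_right hc (mul_nonneg ha hb)]) (by positivity)
      (by positivity)
  rw [abs_div, abs_of_pos hs, div_le_iff₀ hs]
  linarith

theorem sq_re_le_normSq (z : ℂ) : z.re ^ 2 ≤ normSq z := by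
  rw [sq]
  exact re_sq_le_normSq z

def normSq3 (a : Fin 3 → ℂ) : ℝ := ∑ i, normSq (a i)

theorem normSq3_nonneg (a : Fin 3 → ℂ) : 0 ≤ normSq3 a :=
  Finset.sum_nonneg fun i _ => normSq_nonneg (a i)

theorem usqNorm_eq (n : ℂ) (u E B : Fin 3 → ℂ) :
    UsqNorm n u E B = normSq n + normSq3 u + normSq3 E + normSq3 B := rfl

theorem usqNorm_nonneg (n : ℂ) (u E B : Fin 3 → ℂ) : 0 ≤ UsqNorm n u E B := by
  rw [usqNorm_eq]
  linarith [normSq_nonneg n, normSq3_nonneg u, normSq3_nonneg E, normSq3_nonneg B]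

theorem hdotC_self (a : Fin 3 → ℂ) : hdotC a a = normSq3 a := by
  simp [hdotC, normSq3, mul_conj]

theorem normSq3_const_mul (c : ℂ) (a : Fin 3 → ℂ) :
    normSq3 (fun i => c * a i) = normSq c * normSq3 a := by
  simp [normSq3, Finset.mul_sum]

theorem normSq3_neg (a : Fin 3 → ℂ) : normSq3 (fun i => -a i) = normSq3 a := by
  simp [normSq3]

theorem norm_sq_eq_sum_three (k : E3) : ‖k‖ ^ 2 = k 0 ^ 2 + k 1 ^ 2 + k 2 ^ 2 := by
  simp [EuclideanSpace.norm_sq_eq, Fin.sum_univ_three]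

theorem normSq3_vecC (k : E3) : normSq3 (vecC k) = ‖k‖ ^ 2 := by
  simp [normSq3, vecC, EuclideanSpace.norm_sq_eq, ← sq]

theorem normSq3_I_mul_vecC_mul (γ : ℝ) (k : E3) (n : ℂ) :
    normSq3 (fun i => I * γ * (k i : ℂ) * n) = γ ^ 2 * ‖k‖ ^ 2 * normSq n := by
  rw [norm_sq_eq_sum_three]
  simp only [normSq3, Fin.sum_univ_three, normSq_mul, normSq_I, normSq_ofReal]
  ring

theorem normSq_hdotC_le (a b : Fin 3 → ℂ) : normSq (hdotC a b) ≤ normSq3 a * normSq3 b := by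
  have h := Finset.sum_mul_sq_le_sq_mul_sq Finset.univ (fun i => ‖a i‖) (fun i => ‖b i‖)
  have hsum : ‖hdotC a b‖ ≤ ∑ i, ‖a i‖ * ‖b i‖ :=
    (norm_sum_le _ _).trans_eq (by simp)
  simp only [normSq3, normSq_eq_norm_sq]
  calc ‖hdotC a b‖ ^ 2 ≤ (∑ i, ‖a i‖ * ‖b i‖) ^ 2 := by gcongr
    _ ≤ _ := h

theorem sq_re_hdotC_le (a b : Fin 3 → ℂ) : (hdotC a b).re ^ 2 ≤ normSq3 a * normSq3 b :=
  (sq_re_le_normSq _).trans (normSq_hdotC_le a b)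

theorem dotC_vecC_eq_hdotC (k : E3) (a : Fin 3 → ℂ) : dotC (vecC k) a = hdotC a (vecC k) := by
  simp [dotC, hdotC, vecC, mul_comm]

theorem normSq3_crossC_add_normSq_dotC (k : E3) (a : Fin 3 → ℂ) :
    normSq3 (crossC (vecC k) a) + normSq (dotC (vecC k) a) = ‖k‖ ^ 2 * normSq3 a := by
  rw [← normSq3_vecC]
  simp only [normSq3, crossC, dotC, vecC, Fin.sum_univ_three, Matrix.cons_val_zero,
    Matrix.cons_val_one, Matrix.cons_val_two, Matrix.head_cons, Matrix.tail_cons, normSq_apply,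
    add_re, add_im, mul_re, mul_im, sub_re, sub_im, ofReal_re, ofReal_im]
  ring

theorem normSq3_crossC_le (k : E3) (a : Fin 3 → ℂ) :
    normSq3 (crossC (vecC k) a) ≤ ‖k‖ ^ 2 * normSq3 a := by
  linarith [normSq3_crossC_add_normSq_dotC k a, normSq_nonneg (dotC (vecC k) a)]

theorem HasDerivWithinAt.mul_conj {f g : ℝ → ℂ} {f' g' : ℂ} {s : Set ℝ} {t : ℝ}
    (hf : HasDerivWithinAt f f' s t) (hg : HasDerivWithinAt g g' s t) :
    HasDerivWithinAt (fun x => f x * conj (g x)) (f' * conj (g t) + f t * conj g') s t :=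
  hf.mul hg.star

theorem HasDerivWithinAt.re {f : ℝ → ℂ} {f' : ℂ} {s : Set ℝ} {t : ℝ}
    (hf : HasDerivWithinAt f f' s t) : HasDerivWithinAt (fun x => (f x).re) f'.re s t :=
  reCLM.hasFDerivAt.comp_hasDerivWithinAt t hf

section VectorDerivatives

variable {f g : ℝ → Fin 3 → ℂ} {f' g' : Fin 3 → ℂ} {s : Set ℝ} {t : ℝ}

theorem HasDerivWithinAt.hdotC (hf : ∀ i, HasDerivWithinAt (fun x => f x i) (f' i) s t)
    (hg : ∀ i, HasDerivWithinAt (fun x => g x i) (g' i) s t) :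
    HasDerivWithinAt (fun x => hdotC (f x) (g x)) (hdotC f' (g t) + hdotC (f t) g') s t := by
  have h := HasDerivWithinAt.fun_sum (u := Finset.univ) fun i _ => (hf i).mul_conj (hg i)
  rwa [Finset.sum_add_distrib] at h

theorem HasDerivWithinAt.crossC (a : Fin 3 → ℂ)
    (hf : ∀ i, HasDerivWithinAt (fun x => f x i) (f' i) s t) (i : Fin 3) :
    HasDerivWithinAt (fun x => crossC a (f x) i) (crossC a f' i) s t := by
  fin_cases i
  · exact ((hf 2).const_mul (a 1)).sub ((hf 1).const_mul (a 2))
  · exact ((hf 0).const_mul (a 2)).sub ((hf 2).const_mul (a 0))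
  · exact ((hf 1).const_mul (a 0)).sub ((hf 0).const_mul (a 1))

end VectorDerivatives

theorem le_mul_exp_of_hasDerivWithinAt_le {f : ℝ → ℝ} {K : ℝ}
    (hf : ∀ x, 0 ≤ x → ∃ f', HasDerivWithinAt f f' (Ici 0) x ∧ f' ≤ K * f x) {t : ℝ}
    (ht : 0 ≤ t) : f t ≤ f 0 * Real.exp (K * t) := by
  choose! f' hf' hK using hf
  have h := le_gronwallBound_of_liminf_deriv_right_le (f := f) (f' := f') (δ := f 0) (K := K)
    (ε := 0) (a := 0) (b := t)
    (fun x hx => (hf' x hx.1).continuousWithinAt.mono Icc_subset_Ici_self)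
    (fun x hx r hr => ((hf' x hx.1).mono (Ici_subset_Ici.2 hx.1)).liminf_right_slope_le hr)
    le_rfl (fun x hx => by simpa using hK x hx.1) t ⟨ht, le_rfl⟩
  simpa [gronwallBound_ε0] using h

theorem sq_re_hdotC_I_mul_vecC_mul_le (γ : ℝ) (k : E3) (n : ℂ) (u : Fin 3 → ℂ) :
    (hdotC (fun i => I * γ * (k i : ℂ) * n) u).re ^ 2
      ≤ γ ^ 2 * ‖k‖ ^ 2 * normSq n * normSq3 u := by
  have := sq_re_hdotC_le (fun i => I * γ * (k i : ℂ) * n) u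
  rwa [normSq3_I_mul_vecC_mul] at this

theorem sq_re_hdotC_neg_I_mul_crossC_le (k : E3) (B E : Fin 3 → ℂ) :
    (hdotC (fun i => -(I * crossC (vecC k) B i)) E).re ^ 2
      ≤ ‖k‖ ^ 2 * normSq3 B * normSq3 E := by
  refine (sq_re_hdotC_le _ _).trans ?_
  rw [normSq3_neg, normSq3_const_mul, normSq_I, one_mul]
  exact mul_le_mul_of_nonneg_right (normSq3_crossC_le k B) (normSq3_nonneg E)

theorem abs_lyapE_sub_usqNorm_le {κ₁ κ₂ γ : ℝ} (hκ₁ : 0 ≤ κ₁) (hκ₂ : 0 ≤ κ₂) (hγ : 0 ≤ γ)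
    (k : E3) (n : ℂ) (u E B : Fin 3 → ℂ) :
    |lyapE κ₁ κ₂ γ k n u E B - UsqNorm n u E B| ≤ κ₁ * (γ + 1 + κ₂) / 2 * UsqNorm n u E B := by
  have hR : 0 ≤ ‖k‖ ^ 2 := by positivity
  have hN := normSq_nonneg n
  have hU := normSq3_nonneg u
  have hF := normSq3_nonneg E
  have hG := normSq3_nonneg B
  have h₁ : |(hdotC (fun i => I * γ * (k i : ℂ) * n) u).re / (1 + ‖k‖ ^ 2)|
      ≤ (γ * normSq n + γ * normSq3 u) / 2 :=
    abs_div_le_of_sq_le_mul (c := ‖k‖ ^ 2) (by linarith [sq_re_hdotC_I_mul_vecC_mul_le γ k n u])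
      (by nlinarith) (by positivity) (by positivity) (by positivity)
  have h₂ : |‖k‖ ^ 2 * (hdotC E u).re / (1 + ‖k‖ ^ 2) ^ 2| ≤ (normSq3 E + normSq3 u) / 2 :=
    abs_div_le_of_sq_le_mul (c := (‖k‖ ^ 2) ^ 2)
      (by rw [mul_pow]; exact mul_le_mul_of_nonneg_left (sq_re_hdotC_le E u) (sq_nonneg _))
      (by nlinarith) hF hU (by positivity)
  have h₃ : |‖k‖ ^ 2 * (hdotC (fun i => -(I * crossC (vecC k) B i)) E).re / (1 + ‖k‖ ^ 2) ^ 3|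
      ≤ (normSq3 B + normSq3 E) / 2 := by
    refine abs_div_le_of_sq_le_mul (c := (‖k‖ ^ 2) ^ 3) ?_ (by nlinarith) hG hF (by positivity)
    linarith [mul_le_mul_of_nonneg_left (sq_re_hdotC_neg_I_mul_crossC_le k B E)
      (sq_nonneg (‖k‖ ^ 2))]
  have e : lyapE κ₁ κ₂ γ k n u E B - UsqNorm n u E B
      = κ₁ * ((hdotC (fun i => I * γ * (k i : ℂ) * n) u).re / (1 + ‖k‖ ^ 2))
        + κ₁ * (‖k‖ ^ 2 * (hdotC E u).re / (1 + ‖k‖ ^ 2) ^ 2)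
        + κ₁ * κ₂ * (‖k‖ ^ 2 * (hdotC (fun i => -(I * crossC (vecC k) B i)) E).re
          / (1 + ‖k‖ ^ 2) ^ 3) := by
    simp only [lyapE]
    ring
  rw [e, usqNorm_eq]
  calc _ ≤ κ₁ * ((γ * normSq n + γ * normSq3 u) / 2) + κ₁ * ((normSq3 E + normSq3 u) / 2)
        + κ₁ * κ₂ * ((normSq3 B + normSq3 E) / 2) := by
        refine (abs_add_three _ _ _).trans ?_
        simp only [abs_mul, abs_of_nonneg hκ₁, abs_of_nonneg hκ₂]
        gcongr
    _ ≤ _ := by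
      have : 0 ≤ κ₁ * (γ * (normSq3 E + normSq3 B) + (normSq n + normSq3 B)
          + κ₂ * (normSq n + normSq3 u)) := by positivity
      linarith

section Dissipation

/- In the real-variable form of the dissipation estimate, `R = |k|²`, `S = 1 + R`,
`N, U, F, G = |n̂|², |û|², |Ê|², |B̂|²`, `P = |k·û|²`, `X = Re(-i n̂ conj(k·û))`, `W = Re(Ê|û)` and
`Y = Re(i(k×B̂|û))`. -/

variable {γ β μ R S N U F G P X W Y : ℝ}

theorem dissipation_density_velocity_le (hR : 0 ≤ R) (hRS : R ≤ S) (hS : 1 ≤ S) (hN : 0 ≤ N)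
    (hU : 0 ≤ U) (hP : 0 ≤ P) (hPU : P ≤ R * U) (hXP : X ^ 2 ≤ N * P) :
    S ^ 2 * (γ ^ 2 * P - (γ ^ 2 * R + β ^ 2) * N + μ * γ * R * X)
      ≤ S ^ 3 * ((γ ^ 2 + μ ^ 2 / 2) * R * U) - S ^ 2 * (β ^ 2 * N) := by
  have hX : |μ * γ * X| ≤ (γ ^ 2 * N + μ ^ 2 * P) / 2 :=
    abs_le_add_div_two_of_sq_le_mul
      (by linarith [mul_le_mul_of_nonneg_left hXP (sq_nonneg (μ * γ))]) (by positivity)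
      (by positivity)
  calc _ ≤ S ^ 2 * ((γ ^ 2 + μ ^ 2 * R / 2) * (R * U) - β ^ 2 * N) := by
        gcongr
        linarith [mul_le_mul_of_nonneg_left ((le_abs_self _).trans hX) hR,
          mul_le_mul_of_nonneg_left hPU (by positivity : 0 ≤ γ ^ 2 + μ ^ 2 * R / 2),
          mul_nonneg (mul_nonneg (sq_nonneg γ) hR) hN]
    _ ≤ _ := by
      have : 0 ≤ S ^ 2 * R * U * ((S - 1) * γ ^ 2 + (S - R) * μ ^ 2 / 2) := by
        have := sub_nonneg.2 hS
        have := sub_nonneg.2 hRS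
        positivity
      linarith

theorem dissipation_electric_velocity_le (hβ : 0 < β) (hR : 0 ≤ R) (hRS : R ≤ S) (hS : 1 ≤ S)
    (hU : 0 ≤ U) (hF : 0 ≤ F) (hG : 0 ≤ G) (hWFU : W ^ 2 ≤ F * U) (hYGU : Y ^ 2 ≤ R * G * U) :
    R * S * (Y + β * U - β * N - β * F - μ * R * W)
      ≤ S ^ 3 * ((4 * β⁻¹ + β + μ ^ 2 * β⁻¹) * R * U) + R ^ 2 * (β * F / 4 + β * G / 16)
        - R * S * (β * (N + F)) := by
  have hY : |S * Y| ≤ (β * R * G / 8 + 8 * S ^ 2 * U * β⁻¹) / 2 := by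
    refine abs_le_add_div_two_of_sq_le_mul ?_ (by positivity) (by positivity)
    rw [show β * R * G / 8 * (8 * S ^ 2 * U * β⁻¹) = S ^ 2 * (R * G * U) by field_simp, mul_pow]
    gcongr
  have hW : |μ * S * W| ≤ (β * F / 2 + 2 * μ ^ 2 * S ^ 2 * U * β⁻¹) / 2 := by
    refine abs_le_add_div_two_of_sq_le_mul ?_ (by positivity) (by positivity)
    rw [show β * F / 2 * (2 * μ ^ 2 * S ^ 2 * U * β⁻¹) = (μ * S) ^ 2 * (F * U) by field_simp,
      mul_pow]
    gcongr
  have hRU : 0 ≤ R * U := mul_nonneg hR hU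
  have hRS2 : R * S ^ 2 * U ≤ S ^ 3 * R * U := by nlinarith [mul_nonneg hRU (sq_nonneg S)]
  have hR2S2 : R ^ 2 * S ^ 2 * U ≤ S ^ 3 * R * U := by nlinarith [mul_nonneg hRU (sq_nonneg S)]
  have hRSU : R * S * U ≤ S ^ 3 * R * U := by nlinarith [mul_nonneg hRU (sq_nonneg S)]
  have hβ' : 0 ≤ β⁻¹ := by positivity
  linarith [mul_le_mul_of_nonneg_left ((le_abs_self _).trans hY) hR,
    mul_le_mul_of_nonneg_left ((neg_le_abs _).trans hW) (sq_nonneg R),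
    mul_le_mul_of_nonneg_left hRS2 hβ',
    mul_le_mul_of_nonneg_left hR2S2 (mul_nonneg (sq_nonneg μ) hβ'),
    mul_le_mul_of_nonneg_left hRSU hβ.le]

theorem dissipation_curl_electric_le (hR : 0 ≤ R) (hS : 1 ≤ S) (hN : 0 ≤ N) (hU : 0 ≤ U)
    (hG : 0 ≤ G) (hYGU : Y ^ 2 ≤ R * G * U) :
    R * (R * F - (β / γ) ^ 2 * N - R * G - β * Y)
      ≤ S ^ 3 * (β ^ 2 * R * U) + R ^ 2 * (F - 3 * G / 4) := by
  have hY : |β * Y| ≤ (R * G / 2 + 2 * β ^ 2 * U) / 2 :=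
    abs_le_add_div_two_of_sq_le_mul
      (by linarith [mul_le_mul_of_nonneg_left hYGU (sq_nonneg β)]) (by positivity) (by positivity)
  have hS3 : 1 ≤ S ^ 3 := one_le_pow₀ hS
  nlinarith [mul_le_mul_of_nonneg_left ((neg_le_abs _).trans hY) hR,
    mul_le_mul_of_nonneg_right hS3 (by positivity : 0 ≤ β ^ 2 * R * U),
    mul_nonneg hR (mul_nonneg (sq_nonneg (β / γ)) hN)]

theorem lyapunov_dissipation_le {κ₁ δ D₁ D₂ D₃ : ℝ} (hβ : 0 < β) (hμ : 0 ≤ μ) (hκ₁ : 0 ≤ κ₁)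
    (hR : 0 ≤ R) (hRS : R ≤ S) (hS : 1 ≤ S) (hN : 0 ≤ N) (hU : 0 ≤ U) (hF : 0 ≤ F) (hG : 0 ≤ G)
    (hA : κ₁ * (γ ^ 2 + μ ^ 2 / 2 + (4 * β⁻¹ + β + μ ^ 2 * β⁻¹) + β ^ 3 / 4) ≤ μ)
    (hδμ : δ ≤ μ) (hδN : δ ≤ κ₁ * β ^ 2) (hδFG : δ ≤ κ₁ * β / 8)
    (h₁ : S ^ 2 * D₁ ≤ S ^ 3 * ((γ ^ 2 + μ ^ 2 / 2) * R * U) - S ^ 2 * (β ^ 2 * N))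
    (h₂ : R * S * D₂ ≤ S ^ 3 * ((4 * β⁻¹ + β + μ ^ 2 * β⁻¹) * R * U)
      + R ^ 2 * (β * F / 4 + β * G / 16) - R * S * (β * (N + F)))
    (h₃ : R * D₃ ≤ S ^ 3 * (β ^ 2 * R * U) + R ^ 2 * (F - 3 * G / 4)) :
    -(2 * μ * R * U) + κ₁ * D₁ / S + κ₁ * R * D₂ / S ^ 2 + κ₁ * (β / 4) * R * D₃ / S ^ 3
      ≤ -(δ * R ^ 2 * (N + U + F + G) / S ^ 3) := by
  have hS0 : 0 < S := by linarith
  have e : -(2 * μ * R * U) + κ₁ * D₁ / S + κ₁ * R * D₂ / S ^ 2 + κ₁ * (β / 4) * R * D₃ / S ^ 3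
      = (-(2 * μ * (S ^ 3 * R * U)) + κ₁ * (S ^ 2 * D₁) + κ₁ * (R * S * D₂)
        + κ₁ * β / 4 * (R * D₃)) / S ^ 3 := by
    field_simp
  rw [e, ← neg_div, div_le_div_iff_of_pos_right (by positivity)]
  have hR2 : R * R ≤ R * S ^ 3 :=
    mul_le_mul_of_nonneg_left (hRS.trans (le_self_pow₀ hS (by norm_num))) hR
  have hR2S : R ^ 2 ≤ S ^ 2 := by nlinarith
  have hκβ : 0 ≤ κ₁ * β := by positivity
  linarith [mul_le_mul_of_nonneg_left h₁ hκ₁, mul_le_mul_of_nonneg_left h₂ hκ₁,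
    mul_le_mul_of_nonneg_left h₃ (by positivity : 0 ≤ κ₁ * β / 4),
    mul_le_mul_of_nonneg_right hA (by positivity : 0 ≤ S ^ 3 * R * U),
    mul_le_mul hδμ (mul_le_mul_of_nonneg_right hR2 hU) (by positivity) hμ,
    mul_le_mul hδN (mul_le_mul_of_nonneg_right hR2S hN) (by positivity) (by positivity),
    mul_le_mul_of_nonneg_right hδFG (by positivity : 0 ≤ R ^ 2 * (F + G)),
    mul_le_mul_of_nonneg_left
      (mul_le_mul_of_nonneg_right (mul_le_mul_of_nonneg_left hRS hR) hF) hκβ,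
    mul_nonneg hκβ (mul_nonneg (mul_nonneg hR hS0.le) hN),
    mul_nonneg hκβ (mul_nonneg (sq_nonneg R) hF)]

end Dissipation

namespace FourierNSMSol

variable {γ β μ : ℝ} {k : E3} {n : ℝ → ℂ} {u E B : ℝ → Fin 3 → ℂ} {t : ℝ}

theorem dotC_E_eq (sol : FourierNSMSol γ β μ k n u E B) (ht : 0 ≤ t) :
    dotC (vecC k) (E t) = I * (β / γ : ℝ) * n t := by
  linear_combination (-I) * sol.hdivE t ht + dotC (vecC k) (E t) * I_sq

theorem normSq3_crossC_B (sol : FourierNSMSol γ β μ k n u E B) (ht : 0 ≤ t) :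
    normSq3 (crossC (vecC k) (B t)) = ‖k‖ ^ 2 * normSq3 (B t) := by
  simpa [sol.hdivB t ht] using normSq3_crossC_add_normSq_dotC k (B t)

theorem hasDerivWithinAt_usqNorm (sol : FourierNSMSol γ β μ k n u E B) (ht : 0 ≤ t) :
    HasDerivWithinAt (fun s => UsqNorm (n s) (u s) (E s) (B s))
      (-(2 * μ * ‖k‖ ^ 2 * normSq3 (u t))) (Ici 0) t := by
  have h := ((((sol.hn t ht).mul_conj (sol.hn t ht)).fun_add
    (HasDerivWithinAt.hdotC (sol.hu t ht) (sol.hu t ht))).fun_add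
    ((HasDerivWithinAt.hdotC (sol.hE t ht) (sol.hE t ht)).fun_add
    (HasDerivWithinAt.hdotC (sol.hB t ht) (sol.hB t ht)))).re
  convert h using 1
  · funext s
    simp only [usqNorm_eq, mul_conj, hdotC_self, add_re, ofReal_re]
    ring
  · simp only [hdotC, dotC, crossC, vecC, normSq3, Fin.sum_univ_three, Matrix.cons_val_zero,
      Matrix.cons_val_one, Matrix.cons_val_two, Matrix.head_cons, Matrix.tail_cons, map_add,
      map_sub, map_mul, map_neg, conj_ofReal, conj_I, normSq_apply, add_re, add_im, sub_re,
      sub_im, neg_re, neg_im, mul_re, mul_im, I_re, I_im, ofReal_re, ofReal_im, conj_re, conj_im]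
    ring

theorem hasDerivWithinAt_re_hdotC_density_velocity (sol : FourierNSMSol γ β μ k n u E B)
    (hγ : γ ≠ 0) (ht : 0 ≤ t) :
    HasDerivWithinAt (fun s => (hdotC (fun i => I * γ * (k i : ℂ) * n s) (u s)).re)
      (γ ^ 2 * normSq (dotC (vecC k) (u t)) - (γ ^ 2 * ‖k‖ ^ 2 + β ^ 2) * normSq (n t)
        + μ * γ * ‖k‖ ^ 2 * (-I * n t * conj (dotC (vecC k) (u t))).re) (Ici 0) t := by
  have h := (HasDerivWithinAt.hdotC (fun i => (sol.hn t ht).const_mul (I * γ * (k i : ℂ)))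
    (sol.hu t ht)).re
  convert h using 1
  have hX : (-I * n t * conj (dotC (vecC k) (E t))).re = -(β / γ) * normSq (n t) := by
    rw [sol.dotC_E_eq ht]
    simp only [map_mul, conj_ofReal, conj_I, normSq_apply, mul_re, mul_im, neg_re, neg_im, I_re,
      I_im, ofReal_re, ofReal_im, conj_re, conj_im]
    ring
  calc _ = γ ^ 2 * normSq (dotC (vecC k) (u t)) - γ ^ 2 * ‖k‖ ^ 2 * normSq (n t)
        + μ * γ * ‖k‖ ^ 2 * (-I * n t * conj (dotC (vecC k) (u t))).re
        + β * γ * (-I * n t * conj (dotC (vecC k) (E t))).re := by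
        rw [hX]; field_simp; ring
    _ = _ := by
      rw [norm_sq_eq_sum_three]
      simp only [hdotC, dotC, vecC, Fin.sum_univ_three, map_add, map_sub, map_mul, map_neg,
        conj_ofReal, conj_I, normSq_apply, add_re, add_im, sub_re, sub_im, neg_re, neg_im, mul_re,
        mul_im, I_re, I_im, ofReal_re, ofReal_im, conj_re, conj_im]
      ring

theorem hasDerivWithinAt_re_hdotC_electric_velocity (sol : FourierNSMSol γ β μ k n u E B)
    (hγ : γ ≠ 0) (ht : 0 ≤ t) :
    HasDerivWithinAt (fun s => (hdotC (E s) (u s)).re)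
      ((I * hdotC (crossC (vecC k) (B t)) (u t)).re + β * normSq3 (u t) - β * normSq (n t)
        - β * normSq3 (E t) - μ * ‖k‖ ^ 2 * (hdotC (E t) (u t)).re) (Ici 0) t := by
  have h := (HasDerivWithinAt.hdotC (sol.hE t ht) (sol.hu t ht)).re
  convert h using 1
  have hX : (I * conj (n t) * dotC (vecC k) (E t)).re = -(β / γ) * normSq (n t) := by
    rw [sol.dotC_E_eq ht]
    simp only [normSq_apply, mul_re, mul_im, I_re, I_im, ofReal_re, ofReal_im, conj_re, conj_im]
    ring
  calc _ = (I * hdotC (crossC (vecC k) (B t)) (u t)).re + β * normSq3 (u t)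
        + γ * (I * conj (n t) * dotC (vecC k) (E t)).re
        - β * normSq3 (E t) - μ * ‖k‖ ^ 2 * (hdotC (E t) (u t)).re := by
        rw [hX]; field_simp; ring
    _ = _ := by
      simp only [hdotC, dotC, crossC, vecC, normSq3, Fin.sum_univ_three, Matrix.cons_val_zero,
        Matrix.cons_val_one, Matrix.cons_val_two, Matrix.head_cons, Matrix.tail_cons, map_sub,
        map_mul, map_neg, conj_ofReal, conj_I, normSq_apply, add_re, add_im, sub_re, sub_im,
        neg_re, neg_im, mul_re, mul_im, I_re, I_im, ofReal_re, ofReal_im, conj_re, conj_im]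
      ring

theorem hasDerivWithinAt_re_hdotC_curl_electric (sol : FourierNSMSol γ β μ k n u E B)
    (ht : 0 ≤ t) :
    HasDerivWithinAt (fun s => (hdotC (fun i => -(I * crossC (vecC k) (B s) i)) (E s)).re)
      (‖k‖ ^ 2 * normSq3 (E t) - (β / γ) ^ 2 * normSq (n t) - ‖k‖ ^ 2 * normSq3 (B t)
        - β * (I * hdotC (crossC (vecC k) (B t)) (u t)).re) (Ici 0) t := by
  have h := (HasDerivWithinAt.hdotC
    (fun i => ((HasDerivWithinAt.crossC (vecC k) (sol.hB t ht) i).const_mul I).fun_neg)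
    (sol.hE t ht)).re
  convert h using 1
  have hKE : normSq (dotC (vecC k) (E t)) = (β / γ) ^ 2 * normSq (n t) := by
    rw [sol.dotC_E_eq ht, normSq_mul, normSq_mul, normSq_I, normSq_ofReal]
    ring
  calc _ = ‖k‖ ^ 2 * normSq3 (E t) - normSq (dotC (vecC k) (E t))
        - normSq3 (crossC (vecC k) (B t)) - β * (I * hdotC (crossC (vecC k) (B t)) (u t)).re := by
        rw [hKE, sol.normSq3_crossC_B ht]
    _ = _ := by
      rw [norm_sq_eq_sum_three]
      simp only [hdotC, dotC, crossC, vecC, normSq3, Fin.sum_univ_three, Matrix.cons_val_zero,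
        Matrix.cons_val_one, Matrix.cons_val_two, Matrix.head_cons, Matrix.tail_cons, map_add,
        map_sub, map_mul, conj_ofReal, conj_I, normSq_apply, add_re, add_im, sub_re, sub_im,
        neg_re, neg_im, mul_re, mul_im, I_re, I_im, ofReal_re, ofReal_im, conj_re, conj_im]
      ring

theorem exists_hasDerivWithinAt_lyapE_le (sol : FourierNSMSol γ β μ k n u E B) (hγ : 0 < γ)
    (hβ : 0 < β) (hμ : 0 < μ) {κ₁ δ : ℝ} (hκ₁ : 0 ≤ κ₁)
    (hA : κ₁ * (γ ^ 2 + μ ^ 2 / 2 + (4 * β⁻¹ + β + μ ^ 2 * β⁻¹) + β ^ 3 / 4) ≤ μ)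
    (hδμ : δ ≤ μ) (hδN : δ ≤ κ₁ * β ^ 2) (hδFG : δ ≤ κ₁ * β / 8) (ht : 0 ≤ t) :
    ∃ D, HasDerivWithinAt (fun s => lyapE κ₁ (β / 4) γ k (n s) (u s) (E s) (B s)) D (Ici 0) t
      ∧ D ≤ -(δ * ‖k‖ ^ 4 * UsqNorm (n t) (u t) (E t) (B t) / (1 + ‖k‖ ^ 2) ^ 3) := by
  refine ⟨_, (((sol.hasDerivWithinAt_usqNorm ht).fun_add
    (((sol.hasDerivWithinAt_re_hdotC_density_velocity hγ.ne' ht).const_mul κ₁).div_const _)).fun_add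
    (((sol.hasDerivWithinAt_re_hdotC_electric_velocity hγ.ne' ht).const_mul
      (κ₁ * ‖k‖ ^ 2)).div_const _)).fun_add
    (((sol.hasDerivWithinAt_re_hdotC_curl_electric ht).const_mul
      (κ₁ * (β / 4) * ‖k‖ ^ 2)).div_const _), ?_⟩
  have hR : 0 ≤ ‖k‖ ^ 2 := by positivity
  have hRS : ‖k‖ ^ 2 ≤ 1 + ‖k‖ ^ 2 := le_add_of_nonneg_left zero_le_one
  have hS : 1 ≤ 1 + ‖k‖ ^ 2 := le_add_of_nonneg_right hR
  have hPU : normSq (dotC (vecC k) (u t)) ≤ ‖k‖ ^ 2 * normSq3 (u t) := by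
    rw [dotC_vecC_eq_hdotC, mul_comm, ← normSq3_vecC]
    exact normSq_hdotC_le _ _
  have hXP : (-I * n t * conj (dotC (vecC k) (u t))).re ^ 2
      ≤ normSq (n t) * normSq (dotC (vecC k) (u t)) := by
    simpa using sq_re_le_normSq (-I * n t * conj (dotC (vecC k) (u t)))
  have hYGU : (I * hdotC (crossC (vecC k) (B t)) (u t)).re ^ 2
      ≤ ‖k‖ ^ 2 * normSq3 (B t) * normSq3 (u t) := by
    refine (sq_re_le_normSq _).trans ?_
    rw [normSq_mul, normSq_I, one_mul]
    exact (normSq_hdotC_le _ _).trans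
      (mul_le_mul_of_nonneg_right (normSq3_crossC_le k (B t)) (normSq3_nonneg _))
  rw [usqNorm_eq, show ‖k‖ ^ 4 = (‖k‖ ^ 2) ^ 2 by ring]
  exact lyapunov_dissipation_le hβ hμ.le hκ₁ hR hRS hS (normSq_nonneg _)
    (normSq3_nonneg _) (normSq3_nonneg _) (normSq3_nonneg _) hA hδμ hδN hδFG
    (dissipation_density_velocity_le hR hRS hS (normSq_nonneg _)
      (normSq3_nonneg _) (normSq_nonneg _) hPU hXP)
    (dissipation_electric_velocity_le hβ hR hRS hS (normSq3_nonneg _)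
      (normSq3_nonneg _) (normSq3_nonneg _) (sq_re_hdotC_le _ _) hYGU)
    (dissipation_curl_electric_le hR hS (normSq_nonneg _) (normSq3_nonneg _)
      (normSq3_nonneg _) hYGU)

theorem usqNorm_le (sol : FourierNSMSol γ β μ k n u E B) (hγ : 0 < γ) (hβ : 0 < β) (hμ : 0 < μ)
    {κ₁ δ : ℝ} (hκ₁ : 0 ≤ κ₁) (hδ : 0 ≤ δ)
    (hA : κ₁ * (γ ^ 2 + μ ^ 2 / 2 + (4 * β⁻¹ + β + μ ^ 2 * β⁻¹) + β ^ 3 / 4) ≤ μ)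
    (hsmall : κ₁ * (γ + 1 + β / 4) / 2 ≤ 1 / 4)
    (hδμ : δ ≤ μ) (hδN : δ ≤ κ₁ * β ^ 2) (hδFG : δ ≤ κ₁ * β / 8) (ht : 0 ≤ t) :
    UsqNorm (n t) (u t) (E t) (B t)
      ≤ 2 * Real.exp (-(4 / 5 * δ * ‖k‖ ^ 4 * t / (1 + ‖k‖ ^ 2) ^ 3))
        * UsqNorm (n 0) (u 0) (E 0) (B 0) := by
  set ℰ := fun s => lyapE κ₁ (β / 4) γ k (n s) (u s) (E s) (B s)
  set Q := fun s => UsqNorm (n s) (u s) (E s) (B s)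
  have hQ : ∀ s, 0 ≤ Q s := fun s => usqNorm_nonneg _ _ _ _
  have hequiv : ∀ s, |ℰ s - Q s| ≤ Q s / 4 := fun s =>
    (abs_lyapE_sub_usqNorm_le hκ₁ (by positivity) hγ.le k _ _ _ _).trans
      (by linarith [mul_le_mul_of_nonneg_right hsmall (hQ s)])
  have ha : 0 ≤ 4 / 5 * δ * ‖k‖ ^ 4 / (1 + ‖k‖ ^ 2) ^ 3 := by positivity
  have hdecay : ℰ t ≤ ℰ 0 * Real.exp (-(4 / 5 * δ * ‖k‖ ^ 4 / (1 + ‖k‖ ^ 2) ^ 3) * t) := by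
    refine le_mul_exp_of_hasDerivWithinAt_le (fun x hx => ?_) ht
    obtain ⟨D, hD, hDle⟩ :=
      sol.exists_hasDerivWithinAt_lyapE_le hγ hβ hμ hκ₁ hA hδμ hδN hδFG hx
    refine ⟨D, hD, hDle.trans ?_⟩
    have := mul_le_mul_of_nonneg_left (abs_le.1 (hequiv x)).2 ha
    have e : 4 / 5 * δ * ‖k‖ ^ 4 / (1 + ‖k‖ ^ 2) ^ 3 * (Q x / 4 + Q x)
        = δ * ‖k‖ ^ 4 * Q x / (1 + ‖k‖ ^ 2) ^ 3 := by
      ring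
    linarith
  have hexp := Real.exp_pos (-(4 / 5 * δ * ‖k‖ ^ 4 * t / (1 + ‖k‖ ^ 2) ^ 3))
  rw [show -(4 / 5 * δ * ‖k‖ ^ 4 / (1 + ‖k‖ ^ 2) ^ 3) * t
    = -(4 / 5 * δ * ‖k‖ ^ 4 * t / (1 + ‖k‖ ^ 2) ^ 3) by ring] at hdecay
  have h0 := (abs_le.1 (hequiv 0)).2
  have ht' := (abs_le.1 (hequiv t)).1
  nlinarith [mul_le_mul_of_nonneg_right h0 hexp.le, hQ 0]

end FourierNSMSol

theorem exists_lyapunov_constants {γ β μ : ℝ} (hγ : 0 < γ) (hβ : 0 < β) (hμ : 0 < μ) :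
    ∃ κ₁ δ : ℝ, 0 < κ₁ ∧ 0 < δ
      ∧ κ₁ * (γ ^ 2 + μ ^ 2 / 2 + (4 * β⁻¹ + β + μ ^ 2 * β⁻¹) + β ^ 3 / 4) ≤ μ
      ∧ κ₁ * (γ + 1 + β / 4) / 2 ≤ 1 / 4
      ∧ δ ≤ μ ∧ δ ≤ κ₁ * β ^ 2 ∧ δ ≤ κ₁ * β / 8 := by
  set A := γ ^ 2 + μ ^ 2 / 2 + (4 * β⁻¹ + β + μ ^ 2 * β⁻¹) + β ^ 3 / 4
  have hA : 0 < A := by positivity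
  obtain ⟨κ₁, hκ₁, hκA, hκγ⟩ : ∃ κ₁, 0 < κ₁ ∧ κ₁ ≤ μ / A ∧ κ₁ ≤ 1 / (2 * (γ + 1 + β / 4)) :=
    ⟨_, lt_min (by positivity) (by positivity), min_le_left _ _, min_le_right _ _⟩
  rw [le_div_iff₀ hA] at hκA
  rw [le_div_iff₀ (by positivity)] at hκγ
  refine ⟨κ₁, min μ (κ₁ * min (β ^ 2) (β / 8)), hκ₁, lt_min hμ (by positivity), hκA,
    by linarith, min_le_left _ _, ?_, ?_⟩
  · exact (min_le_right _ _).trans (mul_le_mul_of_nonneg_left (min_le_left _ _) hκ₁.le)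
  · have := mul_le_mul_of_nonneg_left (min_le_right (β ^ 2) (β / 8)) hκ₁.le
    linarith [min_le_right μ (κ₁ * min (β ^ 2) (β / 8))]

/-- there are `C, c > 0` depending only on `γ, β, μ` such that
every solution of the Fourier-transformed linearized Navier–Stokes–Maxwell
system at frequency `k` satisfies
`|Û(t,k)|² ≤ C exp(−c|k|⁴t/(1+|k|²)³)|Û(0,k)|²` for all `t ≥ 0`. -/
theorem stmt2 (γ β μ : ℝ) (hγ : 0 < γ) (hβ : 0 < β) (hμ : 0 < μ) :
    ∃ C : ℝ, 0 < C ∧ ∃ c : ℝ, 0 < c ∧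
    ∀ (k : E3) (n : ℝ → ℂ) (u E B : ℝ → Fin 3 → ℂ),
      FourierNSMSol γ β μ k n u E B →
      ∀ t : ℝ, 0 ≤ t →
        UsqNorm (n t) (u t) (E t) (B t)
          ≤ C * Real.exp (-(c * ‖k‖^4 * t / (1 + ‖k‖^2)^3))
            * UsqNorm (n 0) (u 0) (E 0) (B 0) := by
  obtain ⟨κ₁, δ, hκ₁, hδ, hA, hsmall, hδμ, hδN, hδFG⟩ := exists_lyapunov_constants hγ hβ hμ
  exact ⟨2, two_pos, 4 / 5 * δ, by positivity, fun k n u E B sol t ht =>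
    sol.usqNorm_le hγ hβ hμ hκ₁.le hδ.le hA hsmall hδμ hδN hδFG ht⟩

end
end

section
/- Fix a > 0 and r > 0 and let g(z) = z³ + a r z² + (r+1) z + a r². Then g has at least one real root, and every real root σ of g satisfies −ar < σ < −ar²/(r+1). -/
/-! Write `g(σ) = σ²(σ + ar) + ((r+1)σ + ar²)`. For `σ ≤ -ar` both summands are negative, and for
`σ ≥ -ar²/(r+1)` both are nonnegative and not both zero, so every real root lies strictly between
these two points; since `g` changes sign there, a root exists by the intermediate value theorem. -/

namespace EMIndicial

def g (a r σ : ℝ) : ℝ := σ ^ 3 + a * r * σ ^ 2 + (r + 1) * σ + a * r ^ 2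

theorem continuous_g (a r : ℝ) : Continuous (g a r) := by
  unfold g
  fun_prop

theorem g_eq (a r σ : ℝ) : g a r σ = σ ^ 2 * (σ + a * r) + ((r + 1) * σ + a * r ^ 2) := by
  unfold g
  ring

variable {a r σ : ℝ}

theorem neg_mul_lt_neg_mul_sq_div (ha : 0 < a) (hr : 0 < r) : -(a * r) < -(a * r ^ 2) / (r + 1) := by
  rw [neg_div, neg_lt_neg_iff, div_lt_iff₀ (by linarith)]
  linarith [mul_pos ha hr]

theorem g_neg_of_le (ha : 0 < a) (hr : 0 < r) (hσ : σ ≤ -(a * r)) : g a r σ < 0 := by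
  have hcubic : σ ^ 2 * (σ + a * r) ≤ 0 :=
    mul_nonpos_of_nonneg_of_nonpos (sq_nonneg σ) (by linarith)
  have hlinear : (r + 1) * σ + a * r ^ 2 < 0 := by nlinarith [mul_pos ha hr]
  rw [g_eq]
  linarith

theorem g_pos_of_le (ha : 0 < a) (hr : 0 < r) (hσ : -(a * r ^ 2) / (r + 1) ≤ σ) :
    0 < g a r σ := by
  rcases eq_or_ne σ 0 with rfl | hσ₀
  · rw [show g a r 0 = a * r ^ 2 by simp [g]]
    positivity
  have hlinear : 0 ≤ (r + 1) * σ + a * r ^ 2 := by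
    rw [div_le_iff₀ (by linarith)] at hσ
    linarith
  have hcubic : 0 < σ ^ 2 * (σ + a * r) :=
    mul_pos (sq_pos_of_ne_zero hσ₀) (by linarith [neg_mul_lt_neg_mul_sq_div ha hr])
  rw [g_eq]
  linarith

end EMIndicial

open EMIndicial

/-- for `a > 0`, `r > 0`, the cubic `g(z) = z³ + a r z² + (r+1) z + a r²`
has at least one real root, and every real root `σ` satisfies
`-ar < σ < -ar²/(r+1)`. -/
theorem stmt9 (a r : ℝ) (ha : 0 < a) (hr : 0 < r) :
    (∃ σ : ℝ, σ^3 + a*r*σ^2 + (r+1)*σ + a*r^2 = 0) ∧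
    (∀ σ : ℝ, σ^3 + a*r*σ^2 + (r+1)*σ + a*r^2 = 0 →
      -(a*r) < σ ∧ σ < -(a*r^2)/(r+1)) := by
  refine ⟨?_, fun σ hσ => ⟨?_, ?_⟩⟩
  · obtain ⟨σ, -, hσ⟩ := intermediate_value_Icc (neg_mul_lt_neg_mul_sq_div ha hr).le
      (continuous_g a r).continuousOn
      ⟨(g_neg_of_le ha hr le_rfl).le, (g_pos_of_le ha hr le_rfl).le⟩
    exact ⟨σ, hσ⟩
  · exact lt_of_not_ge fun h => (g_neg_of_le ha hr h).ne hσ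
  · exact lt_of_not_ge fun h => (g_pos_of_le ha hr h).ne' hσ
end

section
/- Fix a > 0 and r > 0 and let g(z) = z³ + a r z² + (r+1) z + a r². If a < 3√3/2 and r > 1/a, then g has at least one real root σ with −ar < σ < −ar + 1/(ar). -/
/-!
At `z = -ar` the two top terms of `g` cancel and `g(-ar) = -ar < 0`, while
`(ar)³ g(-ar + 1/(ar)) = a²r²(r - 1) + 1`, which is positive because `r²(1 - r) ≤ 4/27`
for `r ≥ 0` and `a² < 27/4`. The intermediate value theorem gives the root.
-/

def indicialCubic (a r z : ℝ) : ℝ :=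
  z ^ 3 + a * r * z ^ 2 + (r + 1) * z + a * r ^ 2

lemma continuous_indicialCubic (a r : ℝ) : Continuous (indicialCubic a r) := by
  unfold indicialCubic
  fun_prop

lemma indicialCubic_neg_mul (a r : ℝ) : indicialCubic a r (-(a * r)) = -(a * r) := by
  unfold indicialCubic
  ring

lemma indicialCubic_neg_mul_add_inv {a r : ℝ} (ha : a ≠ 0) (hr : r ≠ 0) :
    indicialCubic a r (-(a * r) + 1 / (a * r)) = (a ^ 2 * r ^ 2 * (r - 1) + 1) / (a * r) ^ 3 := by
  unfold indicialCubic
  field_simp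
  ring

-- `4/27 - r²(1 - r) = (3r - 2)²(3r + 1)/27`.
lemma sq_mul_one_sub_le {r : ℝ} (hr : 0 ≤ r) : r ^ 2 * (1 - r) ≤ 4 / 27 := by
  nlinarith [mul_nonneg (sq_nonneg (3 * r - 2)) (by linarith : 0 ≤ 3 * r + 1)]

lemma sq_mul_sq_mul_sub_one_add_one_pos {a r : ℝ} (ha : a ^ 2 < 27 / 4) (hr : 0 ≤ r) :
    0 < a ^ 2 * r ^ 2 * (r - 1) + 1 := by
  nlinarith [mul_le_mul_of_nonneg_left (sq_mul_one_sub_le hr) (sq_nonneg a)]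

lemma sq_lt_of_lt_three_mul_sqrt_three_div_two {a : ℝ} (ha : 0 < a)
    (ha' : a < 3 * Real.sqrt 3 / 2) : a ^ 2 < 27 / 4 := by
  have h : (3 * Real.sqrt 3 / 2) ^ 2 = 27 / 4 := by
    rw [div_pow, mul_pow, Real.sq_sqrt (by norm_num : (0 : ℝ) ≤ 3)]
    norm_num
  rw [← h]
  exact pow_lt_pow_left₀ ha' ha.le two_ne_zero

/-- if `0 < a < 3√3/2` and `r > 1/a`, the cubic
`g(z) = z³ + a r z² + (r+1) z + a r²` has a real root `σ` with
`-ar < σ < -ar + 1/(ar)`. -/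
theorem stmt10 (a r : ℝ) (ha : 0 < a) (ha' : a < 3 * Real.sqrt 3 / 2)
    (hr : 1 / a < r) :
    ∃ σ : ℝ, σ^3 + a*r*σ^2 + (r+1)*σ + a*r^2 = 0 ∧
      -(a*r) < σ ∧ σ < -(a*r) + 1/(a*r) := by
  have hr0 : 0 < r := lt_trans (by positivity) hr
  have har : 0 < a * r := mul_pos ha hr0
  have hleft : indicialCubic a r (-(a * r)) < 0 := by
    rw [indicialCubic_neg_mul]
    linarith
  have hright : 0 < indicialCubic a r (-(a * r) + 1 / (a * r)) := by
    rw [indicialCubic_neg_mul_add_inv ha.ne' hr0.ne']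
    have := sq_mul_sq_mul_sub_one_add_one_pos
      (sq_lt_of_lt_three_mul_sqrt_three_div_two ha ha') hr0.le
    positivity
  obtain ⟨σ, ⟨hσl, hσr⟩, hσ⟩ := intermediate_value_Ioo
    (by linarith [one_div_pos.mpr har] : -(a * r) ≤ -(a * r) + 1 / (a * r))
    (continuous_indicialCubic a r).continuousOn ⟨hleft, hright⟩
  exact ⟨σ, hσ, hσl, hσr⟩
end

section
/- Fix a with 0 < a < √2/4, for r > 0 let σ(r) be the unique real root of g(z) = z³ + a r z² + (r+1) z + a r², and define φ(r) = 3σ(r)² + 2 a r σ(r) − a²r² + 4(r+1). Then φ(r) > 0 for all r > 0, and moreover 3/(a²r²) + 4r ≤ φ(r) ≤ 4(1+r) for all r > √6/(2a). -/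
/-!
Write `b = a r` and `s = σ(r)`. Since `g(s) = 0` forces `(b + s)(s² + r + 1) = b`, the root satisfies
`-b < s < 0`, and `φ = 4(r + 1) - (b + s)(b - 3s)` with both factors positive, which is the upper bound.
Positivity and the lower bound come from `b + s = b / (s² + r + 1)`: the product `(b + s)(b - 3s)`
is at most `4b(b + s) = 4b² / (s² + r + 1)`, and `s² + r + 1` is at least `r + 1`, respectively at
least `b² + 3(r + 1)/4` once `8b² ≤ (r + 1)²`.
-/

def phi (b r s : ℝ) : ℝ := 3 * s ^ 2 + 2 * b * s - b ^ 2 + 4 * (r + 1)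

lemma phi_eq (b r s : ℝ) : phi b r s = 4 * (r + 1) - (b + s) * (b - 3 * s) := by
  unfold phi; ring

section CubicRoot

variable {b r s : ℝ}

lemma cubic_root_add_mul (hs : s ^ 3 + b * s ^ 2 + (r + 1) * s + b * r = 0) :
    (b + s) * (s ^ 2 + r + 1) = b := by
  linear_combination hs

lemma cubic_root_neg (hb : 0 < b) (hr : 0 < r)
    (hs : s ^ 3 + b * s ^ 2 + (r + 1) * s + b * r = 0) : s < 0 := by
  by_contra! h
  nlinarith [pow_nonneg h 3, mul_nonneg hb.le (sq_nonneg s),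
    mul_nonneg (by linarith : 0 ≤ r + 1) h, mul_pos hb hr]

lemma cubic_root_add_pos (hb : 0 < b) (hr : 0 < r)
    (hs : s ^ 3 + b * s ^ 2 + (r + 1) * s + b * r = 0) : 0 < b + s := by
  have hq : 0 < s ^ 2 + r + 1 := by positivity
  exact pos_of_mul_pos_left (by rw [cubic_root_add_mul hs]; exact hb) hq.le

lemma cubic_root_add_mul_le (hb : 0 < b) (hr : 0 < r)
    (hs : s ^ 3 + b * s ^ 2 + (r + 1) * s + b * r = 0) : (b + s) * (r + 1) ≤ b := by
  nlinarith [cubic_root_add_mul hs, mul_nonneg (cubic_root_add_pos hb hr hs).le (sq_nonneg s)]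

lemma phi_le (hb : 0 < b) (hr : 0 < r) (hs : s ^ 3 + b * s ^ 2 + (r + 1) * s + b * r = 0) :
    phi b r s ≤ 4 * (r + 1) := by
  have hprod : 0 < (b + s) * (b - 3 * s) :=
    mul_pos (cubic_root_add_pos hb hr hs) (by linarith [cubic_root_neg hb hr hs])
  linarith [phi_eq b r s]

lemma phi_pos (hb : 0 < b) (hr : 0 < r) (hbr : b ≤ r + 1)
    (hs : s ^ 3 + b * s ^ 2 + (r + 1) * s + b * r = 0) : 0 < phi b r s := by
  have hc := cubic_root_add_pos hb hr hs
  have hcR := cubic_root_add_mul_le hb hr hs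
  have hbc : b * (b + s) ≤ r + 1 := by
    by_contra! h
    nlinarith [mul_lt_mul_of_pos_right h (by linarith : 0 < r + 1),
      mul_le_mul_of_nonneg_left hcR hb.le, mul_self_le_mul_self hb.le hbr]
  nlinarith [phi_eq b r s]

lemma sq_add_le_of_cubic_root (hb : 0 < b) (hr : 0 < r) (hbr : 8 * b ^ 2 ≤ (r + 1) ^ 2)
    (hs : s ^ 3 + b * s ^ 2 + (r + 1) * s + b * r = 0) :
    b ^ 2 + 3 * (r + 1) / 4 ≤ s ^ 2 + r + 1 := by
  have hcR := cubic_root_add_mul_le hb hr hs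
  have hc := cubic_root_add_pos hb hr hs
  have hsq : (b ^ 2 - s ^ 2) * (r + 1) ≤ 2 * b ^ 2 := by
    nlinarith [mul_le_mul_of_nonneg_right hcR (by linarith [cubic_root_neg hb hr hs] : 0 ≤ b - s),
      mul_pos hb hc]
  by_contra! h
  nlinarith [mul_lt_mul_of_pos_right h (by linarith : 0 < r + 1)]

lemma le_phi (hb : 0 < b) (hb2 : 3 / 2 ≤ b ^ 2) (hbr : 8 * b ^ 2 ≤ (r + 1) ^ 2) (hr : 1 ≤ r)
    (hs : s ^ 3 + b * s ^ 2 + (r + 1) * s + b * r = 0) : 4 * r + 3 / b ^ 2 ≤ phi b r s := by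
  have hq : 0 < s ^ 2 + r + 1 := by positivity
  have hgap := sq_add_le_of_cubic_root hb (by linarith) hbr hs
  -- `(4b² - 3)(s² + r + 1 - b²) ≥ 2b² · 3(r + 1)/4 ≥ 3b²`
  have hkey : 3 * (s ^ 2 + r + 1) ≤ 4 * b ^ 2 * (s ^ 2 + r + 1 - b ^ 2) := by nlinarith
  have hprod : (4 - 4 * b * (b + s)) * b ^ 2 * (s ^ 2 + r + 1)
      = 4 * b ^ 2 * (s ^ 2 + r + 1 - b ^ 2) := by
    linear_combination (-4 * b ^ 3) * cubic_root_add_mul hs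
  have hbc : 3 / b ^ 2 ≤ 4 - 4 * b * (b + s) := by
    rw [div_le_iff₀ (by positivity)]
    exact le_of_mul_le_mul_right (hprod ▸ hkey) hq
  nlinarith [phi_eq b r s, sq_nonneg (b + s)]

end CubicRoot

/-- for `0 < a < √2/4`, with `σ(r)` the (unique) real root of
`z³ + a r z² + (r+1) z + a r²` and `φ(r) = 3σ(r)² + 2arσ(r) − a²r² + 4(r+1)`,
one has `φ(r) > 0` for all `r > 0`, and
`3/(a²r²) + 4r ≤ φ(r) ≤ 4(1+r)` for all `r > √6/(2a)`. -/
theorem stmt12 (a : ℝ) (ha : 0 < a) (ha' : a < Real.sqrt 2 / 4)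
    (σ : ℝ → ℝ)
    (hσ : ∀ r : ℝ, 0 < r → (σ r)^3 + a*r*(σ r)^2 + (r+1)*(σ r) + a*r^2 = 0) :
    (∀ r : ℝ, 0 < r → 0 < 3*(σ r)^2 + 2*a*r*(σ r) - a^2*r^2 + 4*(r+1)) ∧
    (∀ r : ℝ, Real.sqrt 6 / (2*a) < r →
      3/(a^2*r^2) + 4*r ≤ 3*(σ r)^2 + 2*a*r*(σ r) - a^2*r^2 + 4*(r+1) ∧
      3*(σ r)^2 + 2*a*r*(σ r) - a^2*r^2 + 4*(r+1) ≤ 4*(1+r)) := by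
  have ha8 : 8 * a ^ 2 < 1 := by
    nlinarith [Real.sq_sqrt (show (0 : ℝ) ≤ 2 by norm_num), Real.sqrt_nonneg 2]
  have hroot (r : ℝ) (hr : 0 < r) :
      σ r ^ 3 + a * r * σ r ^ 2 + (r + 1) * σ r + a * r * r = 0 := by
    linear_combination hσ r hr
  have hphi (r : ℝ) : 3*(σ r)^2 + 2*a*r*(σ r) - a^2*r^2 + 4*(r+1) = phi (a * r) r (σ r) := by
    unfold phi; ring
  refine ⟨fun r hr ↦ ?_, fun r hr ↦ ?_⟩
  · rw [hphi]
    exact phi_pos (by positivity) hr (by nlinarith) (hroot r hr)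
  · have hb2 : 3 / 2 < (a * r) ^ 2 := by
      have h6 : Real.sqrt 6 < 2 * (a * r) := by
        rw [div_lt_iff₀ (by positivity)] at hr; linarith
      nlinarith [Real.sq_sqrt (show (0 : ℝ) ≤ 6 by norm_num), Real.sqrt_nonneg 6]
    have hr0 : 0 < r := lt_trans (by positivity) hr
    have hr1 : 1 ≤ r := by
      nlinarith [mul_lt_mul_of_pos_right ha8 (by positivity : 0 < r ^ 2)]
    rw [hphi, show a ^ 2 * r ^ 2 = (a * r) ^ 2 by ring, add_comm 1 r, add_comm _ (4 * r)]
    exact ⟨le_phi (by positivity) hb2.le (by nlinarith) hr1 (hroot r hr0),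
      phi_le (by positivity) hr0 (hroot r hr0)⟩
end

section
/- Fix a > 0 and r > 0, and set c₂ = ar, c₁ = r+1, c₀ = ar², S = 2c₂³ − 9c₂c₁ + 27c₀ and R = S² − 4(c₂² − 3c₁)³ (the quantities attached to the cubic z³ + c₂z² + c₁z + c₀). Then R = 27[4(1+r)³ + a²r²(8r² − 20r − 1) + 4a⁴r⁵] = 27[4 + 12r + (12 − a²)r² + (4 − 20a²)r³ + 8a²r⁴ + 4a⁴r⁵]. Consequently, if a ≤ 1/√5, then R > 0 for all r > 0, so the cubic z³ + arz² + (r+1)z + ar² has one real root and two non-real complex conjugate roots for every r > 0. -/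
/-!
If `s` is a real root of a monic real cubic (one exists by the intermediate value theorem)
and `z² + pz + q` is the cofactor of `z - s`, then `R = -27 (s² + ps + q)² (p² - 4q)`.
So `R > 0` forces the quadratic factor to have negative discriminant, i.e. a pair of
non-real conjugate roots. For the family of the theorem, expanding `R` gives a polynomial
in `r` whose only possibly negative coefficient, `4 - 20a²`, is nonnegative once `a² ≤ 1/5`.
-/

open ComplexConjugate

/-- The paper's `R = S² - 4(b² - 3c)³` with `S = 2b³ - 9bc + 27d`; it is `-27` times the
discriminant of `z³ + bz² + cz + d`. -/
def cubicR (b c d : ℝ) : ℝ :=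
  (2*b^3 - 9*b*c + 27*d)^2 - 4*(b^2 - 3*c)^3

lemma cubic_pos_of_abs_coeff_le {b c d x : ℝ} (hx : 1 + |b| + |c| + |d| ≤ x) :
    0 < x^3 + b*x^2 + c*x + d := by
  have hx1 : 1 ≤ x := by linarith [abs_nonneg b, abs_nonneg c, abs_nonneg d]
  have hxx : x ≤ x^2 := by nlinarith
  have hb : -|b| * x^2 ≤ b * x^2 := by nlinarith [neg_abs_le b]
  have hc : -|c| * x^2 ≤ c * x := by nlinarith [neg_abs_le c, abs_nonneg c]
  have hd : -|d| * x^2 ≤ d := by nlinarith [neg_abs_le d, abs_nonneg d]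
  nlinarith

lemma exists_cubic_eq_zero (b c d : ℝ) : ∃ s : ℝ, s^3 + b*s^2 + c*s + d = 0 := by
  set t := 1 + |b| + |c| + |d|
  have ht : 0 ≤ t := by positivity
  have hpos : 0 < t^3 + b*t^2 + c*t + d := cubic_pos_of_abs_coeff_le le_rfl
  have hneg : (-t)^3 + b*(-t)^2 + c*(-t) + d < 0 := by
    have := cubic_pos_of_abs_coeff_le (b := -b) (c := c) (d := -d) (x := t) (by simp [t, abs_neg])
    linarith
  obtain ⟨s, -, hs⟩ := intermediate_value_Icc (neg_le_self ht)
    (f := fun x => x^3 + b*x^2 + c*x + d) (by fun_prop) ⟨hneg.le, hpos.le⟩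
  exact ⟨s, hs⟩

lemma cubicR_eq_of_root {b c d s : ℝ} (hs : s^3 + b*s^2 + c*s + d = 0) :
    cubicR b c d = -27 * (s^2 + (b + s)*s + (c + s*(b + s)))^2
      * ((b + s)^2 - 4*(c + s*(b + s))) := by
  unfold cubicR
  linear_combination (-729*s^3 - 729*b*s^2 - 729*c*s + 108*b^3 + 729*d - 486*b*c) * hs

lemma exists_conj_roots_of_discrim_neg {p q : ℝ} (h : p^2 - 4*q < 0) :
    ∃ χ : ℂ, χ.im ≠ 0 ∧ ∀ z : ℂ, z^2 + p*z + q = (z - χ) * (z - conj χ) := by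
  have hδ : 0 < 4*q - p^2 := by linarith
  set χ : ℂ := ⟨-p/2, Real.sqrt (4*q - p^2) / 2⟩
  have hsum : χ + conj χ = -p := by
    rw [Complex.add_conj]
    push_cast [χ]
    ring
  have hprod : χ * conj χ = q := by
    rw [Complex.mul_conj, Complex.normSq_mk]
    norm_cast
    nlinarith [Real.sq_sqrt hδ.le]
  refine ⟨χ, by positivity, fun z => ?_⟩
  linear_combination z * hsum - hprod

theorem exists_real_root_and_conj_roots_of_cubicR_pos {b c d : ℝ} (h : 0 < cubicR b c d) :
    ∃ (s : ℝ) (χ : ℂ), χ.im ≠ 0 ∧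
      ∀ z : ℂ, z^3 + b*z^2 + c*z + d = (z - s) * (z - χ) * (z - conj χ) := by
  obtain ⟨s, hs⟩ := exists_cubic_eq_zero b c d
  have hdiscrim : (b + s)^2 - 4*(c + s*(b + s)) < 0 := by
    rw [cubicR_eq_of_root hs] at h
    nlinarith [sq_nonneg (s^2 + (b + s)*s + (c + s*(b + s)))]
  obtain ⟨χ, hχ, hfactor⟩ := exists_conj_roots_of_discrim_neg hdiscrim
  refine ⟨s, χ, hχ, fun z => ?_⟩
  have hsC : (s:ℂ)^3 + b*s^2 + c*s + d = 0 := by exact_mod_cast hs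
  rw [mul_assoc, ← hfactor]
  push_cast
  linear_combination hsC

lemma cubicR_family_eq (a r : ℝ) :
    cubicR (a*r) (r+1) (a*r^2)
      = 27*(4 + 12*r + (12 - a^2)*r^2 + (4 - 20*a^2)*r^3 + 8*a^2*r^4 + 4*a^4*r^5) := by
  unfold cubicR
  ring

lemma sq_le_of_le_one_div_sqrt {a x : ℝ} (ha : 0 ≤ a) (hx : 0 ≤ x) (h : a ≤ 1 / Real.sqrt x) :
    a^2 ≤ 1 / x := by
  calc a^2 ≤ (1 / Real.sqrt x)^2 := pow_le_pow_left₀ ha h 2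
    _ = 1 / x := by rw [div_pow, Real.sq_sqrt hx, one_pow]

/-- with `c₂ = ar`, `c₁ = r+1`, `c₀ = ar²`,
`S = 2c₂³ − 9c₂c₁ + 27c₀` and `R = S² − 4(c₂² − 3c₁)³`, one has the two
closed forms of `R`, and if `a ≤ 1/√5` then `R > 0`, so the cubic
`z³ + arz² + (r+1)z + ar²` has one real root and two non-real complex
conjugate roots. -/
theorem stmt14 (a r : ℝ) (ha : 0 < a) (hr : 0 < r) :
    ((2*(a*r)^3 - 9*(a*r)*(r+1) + 27*(a*r^2))^2 - 4*((a*r)^2 - 3*(r+1))^3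
      = 27*(4*(1+r)^3 + a^2*r^2*(8*r^2 - 20*r - 1) + 4*a^4*r^5)) ∧
    ((2*(a*r)^3 - 9*(a*r)*(r+1) + 27*(a*r^2))^2 - 4*((a*r)^2 - 3*(r+1))^3
      = 27*(4 + 12*r + (12 - a^2)*r^2 + (4 - 20*a^2)*r^3 + 8*a^2*r^4 + 4*a^4*r^5)) ∧
    (a ≤ 1 / Real.sqrt 5 →
      0 < (2*(a*r)^3 - 9*(a*r)*(r+1) + 27*(a*r^2))^2 - 4*((a*r)^2 - 3*(r+1))^3 ∧
      ∃ (s : ℝ) (χ : ℂ), χ.im ≠ 0 ∧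
        ∀ z : ℂ, z^3 + (a:ℂ)*(r:ℂ)*z^2 + ((r:ℂ)+1)*z + (a:ℂ)*(r:ℂ)^2
          = (z - (s:ℂ)) * (z - χ) * (z - (starRingEnd ℂ) χ)) := by
  refine ⟨by ring, cubicR_family_eq a r, fun hle => ?_⟩
  have ha2 := sq_le_of_le_one_div_sqrt ha.le (by norm_num) hle
  have hR : 0 < cubicR (a*r) (r+1) (a*r^2) := by
    rw [cubicR_family_eq]
    have h3 : 0 ≤ (4 - 20*a^2)*r^3 := mul_nonneg (by linarith) (by positivity)
    have h2 : 0 ≤ (12 - a^2)*r^2 := mul_nonneg (by linarith) (by positivity)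
    positivity
  refine ⟨hR, ?_⟩
  simpa using exists_real_root_and_conj_roots_of_cubicR_pos hR
end

section
/- Fix a with 0 < a ≤ √2/4 and for r > 0 let σ(r) be the unique real root of g(z) = z³ + a r z² + (r+1) z + a r². Then σ(r) = −ar² + ar³ − ar⁴ + O(r⁵) as r → 0⁺; that is, there exist constants C > 0 and r₀ > 0 such that |σ(r) + ar² − ar³ + ar⁴| ≤ C r⁵ for all 0 < r < r₀. -/
/-!
Let `p(r) = -a r² + a r³ - a r⁴`. A direct computation gives `g(p) = O(r⁵)`, and
`g(σ) - g(p) = (σ - p) · Q(σ, p)` with a quadratic divided difference `Q`. Completing squares,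
`Q ≥ 1 + r - (a r)² / 3` everywhere, so `Q ≥ 1/2` once `|a r| ≤ 1`; hence
`|σ - p| ≤ 2 |g(p)| = O(r⁵)`.
-/

namespace SigmaExpansion

def g (a r z : ℝ) : ℝ := z ^ 3 + a * r * z ^ 2 + (r + 1) * z + a * r ^ 2

def divDiff (a r s p : ℝ) : ℝ := s ^ 2 + s * p + p ^ 2 + a * r * (s + p) + (r + 1)

def approxRoot (a r : ℝ) : ℝ := -a * r ^ 2 + a * r ^ 3 - a * r ^ 4

variable {a r : ℝ}

theorem g_sub_g_eq_mul_divDiff (a r s p : ℝ) :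
    g a r s - g a r p = (s - p) * divDiff a r s p := by
  unfold g divDiff
  ring

theorem one_add_sub_le_divDiff (a r s p : ℝ) : 1 + r - (a * r) ^ 2 / 3 ≤ divDiff a r s p := by
  unfold divDiff
  nlinarith [sq_nonneg (s + (p + a * r) / 2), sq_nonneg (p + a * r / 3)]

theorem g_approxRoot (a r : ℝ) :
    g a r (approxRoot a r) =
      a * r ^ 5 * (a ^ 2 * (1 - r + r ^ 2) ^ 2 * ((1 - r) * (1 + r ^ 2)) - 1) := by
  unfold g approxRoot
  ring

theorem abs_g_approxRoot_le (hr₀ : 0 ≤ r) (hr₁ : r ≤ 1) :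
    |g a r (approxRoot a r)| ≤ |a| * (a ^ 2 + 1) * r ^ 5 := by
  set x := a ^ 2 * (1 - r + r ^ 2) ^ 2 * ((1 - r) * (1 + r ^ 2))
  have hu₀ : 0 ≤ 1 - r + r ^ 2 := by nlinarith
  have hu₁ : 1 - r + r ^ 2 ≤ 1 := by nlinarith
  have hv₀ : 0 ≤ (1 - r) * (1 + r ^ 2) := by nlinarith
  have hv₁ : (1 - r) * (1 + r ^ 2) ≤ 1 := by nlinarith
  have hx₀ : 0 ≤ x := by positivity
  have hx₁ : x ≤ a ^ 2 := by
    have hw : (1 - r + r ^ 2) ^ 2 * ((1 - r) * (1 + r ^ 2)) ≤ 1 := by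
      nlinarith [pow_le_one₀ hu₀ hu₁ (n := 2), sq_nonneg (1 - r + r ^ 2)]
    calc x = a ^ 2 * ((1 - r + r ^ 2) ^ 2 * ((1 - r) * (1 + r ^ 2))) := by ring
      _ ≤ a ^ 2 * 1 := by gcongr
      _ = a ^ 2 := mul_one _
  have hx : |x - 1| ≤ a ^ 2 + 1 := abs_le.mpr ⟨by linarith, by linarith⟩
  rw [g_approxRoot, abs_mul, abs_mul, abs_pow, abs_of_nonneg hr₀]
  calc |a| * r ^ 5 * |x - 1| ≤ |a| * r ^ 5 * (a ^ 2 + 1) := by gcongr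
    _ = |a| * (a ^ 2 + 1) * r ^ 5 := by ring

theorem abs_sub_approxRoot_le {s : ℝ} (hs : g a r s = 0) (hr₀ : 0 ≤ r) (hr₁ : r ≤ 1)
    (har : |a * r| ≤ 1) : |s - approxRoot a r| ≤ 2 * |a| * (a ^ 2 + 1) * r ^ 5 := by
  set Q := divDiff a r s (approxRoot a r)
  have hQ : 1 / 2 ≤ Q := by
    have : (a * r) ^ 2 ≤ 1 := by
      rw [← sq_abs]
      exact pow_le_one₀ (abs_nonneg _) har
    linarith [one_add_sub_le_divDiff a r s (approxRoot a r)]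
  have hfac : |s - approxRoot a r| * Q = |g a r (approxRoot a r)| := by
    rw [← abs_of_pos (by linarith : 0 < Q), ← abs_mul, ← g_sub_g_eq_mul_divDiff, hs, zero_sub,
      abs_neg]
  have hbound := abs_g_approxRoot_le (a := a) hr₀ hr₁
  nlinarith [abs_nonneg (s - approxRoot a r)]

end SigmaExpansion

open SigmaExpansion in
theorem stmt15_general (a : ℝ) (ha : 0 < a)
    (σ : ℝ → ℝ)
    (hσ : ∀ r : ℝ, 0 < r → (σ r)^3 + a*r*(σ r)^2 + (r+1)*(σ r) + a*r^2 = 0) :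
    ∃ C : ℝ, 0 < C ∧ ∃ r₀ : ℝ, 0 < r₀ ∧ ∀ r : ℝ, 0 < r → r < r₀ →
      |σ r + a*r^2 - a*r^3 + a*r^4| ≤ C * r^5 := by
  refine ⟨2 * a * (a ^ 2 + 1), by positivity, 1 / (a + 1), by positivity, fun r hr hr₁ => ?_⟩
  have hr' : r * (a + 1) < 1 := (lt_div_iff₀ (by positivity)).mp hr₁
  have har : |a * r| ≤ 1 := by
    rw [abs_of_pos (by positivity)]
    nlinarith
  have h := abs_sub_approxRoot_le (hσ r hr) hr.le (by nlinarith) har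
  rw [abs_of_pos ha] at h
  convert h using 2
  unfold approxRoot
  ring

/-- for `0 < a ≤ √2/4` and `σ(r)` the (unique) real root of
`z³ + arz² + (r+1)z + ar²`, one has
`σ(r) = −ar² + ar³ − ar⁴ + O(r⁵)` as `r → 0⁺`. -/
theorem stmt15 (a : ℝ) (ha : 0 < a) (ha' : a ≤ Real.sqrt 2 / 4)
    (σ : ℝ → ℝ)
    (hσ : ∀ r : ℝ, 0 < r → (σ r)^3 + a*r*(σ r)^2 + (r+1)*(σ r) + a*r^2 = 0) :
    ∃ C : ℝ, 0 < C ∧ ∃ r₀ : ℝ, 0 < r₀ ∧ ∀ r : ℝ, 0 < r → r < r₀ →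
      |σ r + a*r^2 - a*r^3 + a*r^4| ≤ C * r^5 :=
  stmt15_general a ha σ hσ
end

section
/- Fix a with 0 < a ≤ √2/4 and for r > 0 let σ(r) be the unique real root of g(z) = z³ + a r z² + (r+1) z + a r². Then σ(r) = −ar + 1/(ar) − 1/(a³r²) + O(r⁻³) as r → ∞; that is, there exist constants C > 0 and r₀ > 0 such that |σ(r) + ar − 1/(ar) + 1/(a³r²)| ≤ C r⁻³ for all r > r₀. -/
/-!
Write `u = σ + a r`. Since `g(z) = (z + a r)(z² + r + 1) - a r`, a root satisfies
`u (σ² + r + 1) = a r`, so `0 < u < a`. For `r ≥ 2` this gives `σ ≤ -a r / 2`, hence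
`σ² + r + 1 ≥ a² r² / 4` and `u ≤ 4 / (a r)`. The error term equals `N / (a³ r³)` with
`N = u (a r)³ - (a r)² + r`, and `N (σ² + r + 1)` is an explicit polynomial in `u, a, r` which
these bounds make `O(r²)`; dividing by `σ² + r + 1 ≥ a² r² / 4` gives `N = O(1)`.
-/

section CubicRoot

variable {a r s : ℝ}

theorem cubic_root_iff_mul_eq :
    s ^ 3 + a * r * s ^ 2 + (r + 1) * s + a * r ^ 2 = 0 ↔
      (s + a * r) * (s ^ 2 + r + 1) = a * r := by
  constructor <;> intro h <;> linear_combination h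

variable (h : (s + a * r) * (s ^ 2 + r + 1) = a * r)
include h

theorem root_add_pos (ha : 0 < a) (hr : 0 < r) : 0 < s + a * r :=
  (mul_pos_iff_of_pos_right (by positivity)).mp (h ▸ mul_pos ha hr)

theorem root_add_lt (ha : 0 < a) (hr : 0 < r) : s + a * r < a := by
  have hu := root_add_pos h ha hr
  nlinarith [mul_nonneg hu.le (sq_nonneg s)]

theorem sq_le_root_sq_add (ha : 0 < a) (hr : 2 ≤ r) : a ^ 2 * r ^ 2 / 4 ≤ s ^ 2 + r + 1 := by
  have hr0 : 0 < r := by linarith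
  have hs : s ≤ -(a * r) / 2 := by nlinarith [root_add_lt h ha hr0]
  nlinarith [mul_nonneg (by linarith : 0 ≤ -s - a * r / 2) (by nlinarith : 0 ≤ -s + a * r / 2)]

theorem root_add_mul_le (ha : 0 < a) (hr : 2 ≤ r) : (s + a * r) * (a * r) ≤ 4 := by
  have hu := root_add_pos h ha (by linarith)
  nlinarith [mul_le_mul_of_nonneg_left (sq_le_root_sq_add h ha hr) hu.le, mul_pos ha hu]

theorem numerator_mul_eq :
    ((s + a * r) * (a * r) ^ 3 - (a * r) ^ 2 + r) * (s ^ 2 + r + 1) =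
      -a ^ 2 * r ^ 2 + r ^ 2 + r - r * (a ^ 2 * r - 1) * (s + a * r) ^ 2
        + 2 * a * r ^ 2 * (a ^ 2 * r - 1) * (s + a * r) := by
  linear_combination (a * r) ^ 3 * h

theorem abs_numerator_mul_le (ha : 0 < a) (hr : 2 ≤ r) (ha2r : 1 ≤ a ^ 2 * r) :
    |(s + a * r) * (a * r) ^ 3 - (a * r) ^ 2 + r| * (s ^ 2 + r + 1) ≤
      (9 * a ^ 2 + 18) * r ^ 2 := by
  have hr0 : 0 < r := by linarith
  have hu := root_add_pos h ha hr0
  have hv := root_add_mul_le h ha hr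
  have hquad : 0 ≤ r * (a ^ 2 * r - 1) * (s + a * r) ^ 2 ∧
      r * (a ^ 2 * r - 1) * (s + a * r) ^ 2 ≤ 16 := by
    constructor
    · exact mul_nonneg (mul_nonneg hr0.le (by linarith)) (sq_nonneg _)
    · nlinarith [mul_pos hu (mul_pos ha hr0), mul_nonneg hr0.le (sq_nonneg (s + a * r))]
  have hlin : 0 ≤ 2 * a * r ^ 2 * (a ^ 2 * r - 1) * (s + a * r) ∧
      2 * a * r ^ 2 * (a ^ 2 * r - 1) * (s + a * r) ≤ 8 * a ^ 2 * r ^ 2 := by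
    constructor
    · exact mul_nonneg (mul_nonneg (by positivity) (by linarith)) hu.le
    · nlinarith [mul_nonneg (by positivity : (0 : ℝ) ≤ 2 * a * r ^ 2) hu.le]
  rw [← abs_of_pos (show 0 < s ^ 2 + r + 1 by positivity), ← abs_mul, numerator_mul_eq h,
    abs_le]
  constructor <;> nlinarith [sq_nonneg (a * r)]

theorem abs_numerator_le (ha : 0 < a) (hr : 2 ≤ r) (ha2r : 1 ≤ a ^ 2 * r) :
    |(s + a * r) * (a * r) ^ 3 - (a * r) ^ 2 + r| ≤ 4 * (9 * a ^ 2 + 18) / a ^ 2 := by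
  have hND := abs_numerator_mul_le h ha hr ha2r
  set N := (s + a * r) * (a * r) ^ 3 - (a * r) ^ 2 + r
  have hmul : |N| * a ^ 2 * r ^ 2 ≤ 4 * (9 * a ^ 2 + 18) * r ^ 2 := by
    nlinarith [mul_le_mul_of_nonneg_left (sq_le_root_sq_add h ha hr) (abs_nonneg N)]
  rw [le_div_iff₀ (by positivity)]
  exact le_of_mul_le_mul_right hmul (by positivity)

end CubicRoot

theorem expansion_error_eq {a r s : ℝ} (ha : a ≠ 0) (hr : r ≠ 0) :
    s + a * r - 1 / (a * r) + 1 / (a ^ 3 * r ^ 2) =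
      ((s + a * r) * (a * r) ^ 3 - (a * r) ^ 2 + r) / (a ^ 3 * r ^ 3) := by
  field_simp

theorem stmt16_general (a : ℝ) (ha : 0 < a)
    (σ : ℝ → ℝ)
    (hσ : ∀ r : ℝ, 0 < r → (σ r)^3 + a*r*(σ r)^2 + (r+1)*(σ r) + a*r^2 = 0) :
    ∃ C : ℝ, 0 < C ∧ ∃ r₀ : ℝ, 0 < r₀ ∧ ∀ r : ℝ, r₀ < r →
      |σ r + a*r - 1/(a*r) + 1/(a^3*r^2)| ≤ C / r^3 := by
  refine ⟨4 * (9 * a ^ 2 + 18) / a ^ 5, by positivity, 2 + 1 / a ^ 2, by positivity,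
    fun r hr => ?_⟩
  have hr2 : 2 ≤ r := by linarith [show 0 < 1 / a ^ 2 by positivity]
  have ha2r : 1 ≤ a ^ 2 * r := (div_le_iff₀' (by positivity)).mp (by linarith)
  have hroot := cubic_root_iff_mul_eq.mp (hσ r (by linarith))
  rw [expansion_error_eq ha.ne' (by positivity), abs_div,
    abs_of_pos (show 0 < a ^ 3 * r ^ 3 by positivity)]
  calc _ ≤ 4 * (9 * a ^ 2 + 18) / a ^ 2 / (a ^ 3 * r ^ 3) := by
        gcongr; exact abs_numerator_le hroot ha hr2 ha2r
    _ = 4 * (9 * a ^ 2 + 18) / a ^ 5 / r ^ 3 := by field_simp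

/-- for `0 < a ≤ √2/4` and `σ(r)` the (unique) real root of
`z³ + arz² + (r+1)z + ar²`, one has
`σ(r) = −ar + 1/(ar) − 1/(a³r²) + O(r⁻³)` as `r → ∞`. -/
theorem stmt16 (a : ℝ) (ha : 0 < a) (ha' : a ≤ Real.sqrt 2 / 4)
    (σ : ℝ → ℝ)
    (hσ : ∀ r : ℝ, 0 < r → (σ r)^3 + a*r*(σ r)^2 + (r+1)*(σ r) + a*r^2 = 0) :
    ∃ C : ℝ, 0 < C ∧ ∃ r₀ : ℝ, 0 < r₀ ∧ ∀ r : ℝ, r₀ < r →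
      |σ r + a*r - 1/(a*r) + 1/(a^3*r^2)| ≤ C / r^3 :=
  stmt16_general a ha σ hσ
end
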